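/- For every fibration p : E → B there is a bijection between the normal cleavages of p and the good maps s : E^p → E: the good map associated to a normal cleavage Σ sends an object (e, φ : p(e) → b) of E^p to the codomain of the unique arrow of Σ with domain e lying over φ, and conversely the normal cleavage associated to a good map s is the set of arrows s(id_e, φ) for e an object of E and φ an arrow of B with domain p(e). -/

import Mathlib

open CategoryTheory Simplicial Opposite

namespace DelHoyo

universe w
variable {E B : Type} [SmallCategory E] [SmallCategory B]

/-- An arrow `f : e ⟶ e'` is *cartesian* for `p : E ⥤ B` (in the covariant, cofibred-category
convention of the paper): every `g : e ⟶ e''` lying over `p f` factors uniquely through `f`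
by an arrow lying over the identity of `p e'`. -/
def IsCartArrow (p : E ⥤ B) {e e' : E} (f : e ⟶ e') : Prop :=
  ∀ ⦃e'' : E⦄ (g : e ⟶ e'') (w : p.obj e' = p.obj e''),
    p.map g = p.map f ≫ eqToHom w →
    ∃! h : e' ⟶ e'', p.map h = eqToHom w ∧ f ≫ h = g

/-- `p` is a prefibration: over every arrow `φ` with source `p e` there is a cartesian arrow
with source `e`. -/
def IsPrefibration (p : E ⥤ B) : Prop :=
  ∀ (e : E) (b : B) (φ : p.obj e ⟶ b),
    ∃ (e' : E) (f : e ⟶ e') (w : p.obj e' = b),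
      IsCartArrow p f ∧ p.map f ≫ eqToHom w = φ

/-- `p` is a (Grothendieck, covariant) fibration: a prefibration in which cartesian arrows are
closed under composition. -/
def IsFibration (p : E ⥤ B) : Prop :=
  IsPrefibration p ∧
    ∀ ⦃e e' e'' : E⦄ (f : e ⟶ e') (g : e' ⟶ e''),
      IsCartArrow p f → IsCartArrow p g → IsCartArrow p (f ≫ g)

/-- A cleavage: a set of cartesian arrows containing exactly one arrow with domain `e`
over each arrow `φ : p e ⟶ b`. -/
structure Cleavage (p : E ⥤ B) where
  σ : ∀ ⦃e e' : E⦄, (e ⟶ e') → Prop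
  cart : ∀ ⦃e e' : E⦄ (f : e ⟶ e'), σ f → IsCartArrow p f
  lift : ∀ (e : E) (b : B) (φ : p.obj e ⟶ b),
      ∃ (e' : E) (f : e ⟶ e') (w : p.obj e' = b), σ f ∧ p.map f ≫ eqToHom w = φ
  uniq : ∀ ⦃e e₁ e₂ : E⦄ (f : e ⟶ e₁) (g : e ⟶ e₂) (w : p.obj e₁ = p.obj e₂),
      σ f → σ g → p.map f ≫ eqToHom w = p.map g →
      ∃ h : e₁ = e₂, f ≫ eqToHom h = g

/-- A cleavage is normal if it contains the identities. -/
def Cleavage.IsNormal {p : E ⥤ B} (S : Cleavage p) : Prop := ∀ e : E, S.σ (𝟙 e)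

/-- A cleavage is closed if it is closed under composition. -/
def Cleavage.IsClosed {p : E ⥤ B} (S : Cleavage p) : Prop :=
  ∀ ⦃e e' e'' : E⦄ (f : e ⟶ e') (g : e' ⟶ e''), S.σ f → S.σ g → S.σ (f ≫ g)

/-! ### Weak equivalences -/

/-- A continuous map (in `TopCat`) is a homotopy equivalence. -/
def IsHtpyEquivT {X Y : TopCat} (f : X ⟶ Y) : Prop :=
  ∃ g : Y ⟶ X, ContinuousMap.Homotopic (g.hom.comp f.hom) (ContinuousMap.id X) ∧
                 ContinuousMap.Homotopic (f.hom.comp g.hom) (ContinuousMap.id Y)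

/-- A map of simplicial sets is a weak equivalence if its geometric realization is a
homotopy equivalence. -/
noncomputable def SSetWE {X Y : SSet} (f : X ⟶ Y) : Prop := IsHtpyEquivT (SSet.toTop.map f)

/-- The map of nerves induced by a functor. -/
def nerveMap {C D : Type} [SmallCategory C] [SmallCategory D] (F : C ⥤ D) :
    nerve C ⟶ nerve D where
  app _ := TypeCat.ofHom (fun x => x ⋙ F)
  naturality _ _ _ := rfl

/-- A functor between small categories is a weak equivalence if the induced map of
classifying spaces is a homotopy equivalence. -/
noncomputable def WEqF {C D : Type} [SmallCategory C] [SmallCategory D] (F : C ⥤ D) : Prop :=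
  SSetWE (nerveMap F)

/-! ### Fibers -/

/-- The fiber of `p : E ⥤ B` over `b`: objects over `b`, arrows over `𝟙 b`. -/
structure FibObj (p : E ⥤ B) (b : B) where
  obj : E
  over' : p.obj obj = b

instance fibCategory (p : E ⥤ B) (b : B) : SmallCategory (FibObj p b) where
  Hom X Y := { f : X.obj ⟶ Y.obj // p.map f = eqToHom (X.over'.trans Y.over'.symm) }
  id X := ⟨𝟙 X.obj, by simp⟩
  comp f g := ⟨f.1 ≫ g.1, by rw [Functor.map_comp, f.2, g.2, eqToHom_trans]⟩
  id_comp f := Subtype.ext (Category.id_comp f.1)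
  comp_id f := Subtype.ext (Category.comp_id f.1)
  assoc f g h := Subtype.ext (Category.assoc f.1 g.1 h.1)

/-- The functor induced on fibers by a functor over `B`. -/
def fibMap {E' : Type} [SmallCategory E'] {p : E ⥤ B} {p' : E' ⥤ B}
    (s : E ⥤ E') (hs : s ⋙ p' = p) (b : B) : FibObj p b ⥤ FibObj p' b where
  obj X := ⟨s.obj X.obj, (Functor.congr_obj hs X.obj).trans X.over'⟩
  map {X Y} f := ⟨s.map f.1, by
    have h := Functor.congr_hom hs f.1
    simp only [Functor.comp_map] at h
    rw [h, f.2, eqToHom_trans, eqToHom_trans]⟩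
  map_id X := Subtype.ext (s.map_id X.obj)
  map_comp f g := Subtype.ext (s.map_comp f.1 g.1)

/-! ### The mapping category `E^u` -/

/-- The mapping category `E^u` of a functor `u : A ⟶ B`. -/
structure MapCat {A : Type} [SmallCategory A] (u : A ⥤ B) where
  pt : A
  base : B
  hom : u.obj pt ⟶ base

/-- Morphisms in the mapping category. -/
@[ext] structure MapCatHom {A : Type} [SmallCategory A] {u : A ⥤ B} (X Y : MapCat u) where
  f : X.pt ⟶ Y.pt
  g : X.base ⟶ Y.base
  w : X.hom ≫ g = u.map f ≫ Y.hom

instance mapCatCategory {A : Type} [SmallCategory A] (u : A ⥤ B) :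
    SmallCategory (MapCat u) where
  Hom := MapCatHom
  id X := ⟨𝟙 _, 𝟙 _, by simp⟩
  comp F G := ⟨F.f ≫ G.f, F.g ≫ G.g, by
    rw [← Category.assoc, F.w, Category.assoc, G.w, Functor.map_comp, Category.assoc]⟩
  id_comp F := by apply MapCatHom.ext <;> simp
  comp_id F := by apply MapCatHom.ext <;> simp
  assoc F G H := by apply MapCatHom.ext <;> simp

/-- The canonical inclusion `i : A ⥤ E^u`. -/
def MapCat.incl {A : Type} [SmallCategory A] (u : A ⥤ B) : A ⥤ MapCat u where
  obj a := ⟨a, u.obj a, 𝟙 _⟩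
  map f := ⟨f, u.map f, by simp⟩
  map_id a := MapCatHom.ext rfl (u.map_id a)
  map_comp f g := MapCatHom.ext rfl (u.map_comp f g)

/-- The projection `π : E^u ⥤ B`. -/
def MapCat.proj {A : Type} [SmallCategory A] (u : A ⥤ B) : MapCat u ⥤ B where
  obj X := X.base
  map F := F.g
  map_id _ := rfl
  map_comp _ _ := rfl

/-- The retraction `r : E^u ⥤ A`. -/
def MapCat.retr {A : Type} [SmallCategory A] (u : A ⥤ B) : MapCat u ⥤ A where
  obj X := X.pt
  map F := F.f
  map_id _ := rfl
  map_comp _ _ := rfl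

/-- A *good* map for a fibration `p`: a retraction for `i : E ⥤ E^p` commuting with the
projections to `B` and preserving cartesian arrows. -/
structure GoodMap (p : E ⥤ B) where
  s : MapCat p ⥤ E
  retr : MapCat.incl p ⋙ s = 𝟭 E
  over' : s ⋙ p = MapCat.proj p
  cart : ∀ ⦃X Y : MapCat p⦄ (f : X ⟶ Y),
    IsCartArrow (MapCat.proj p) f → IsCartArrow p (s.map f)

/-- The arrow `(id_e, φ) : (e, id) ⟶ (e, φ)` of `E^u`; these arrows form the canonical
closed cleavage `Σ^u` of `E^u`. -/
def clArrow {A : Type} [SmallCategory A] (u : A ⥤ B) (e : A) {b : B} (φ : u.obj e ⟶ b) :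
    (MapCat.incl u).obj e ⟶ (MapCat.mk e b φ) :=
  ⟨𝟙 e, φ, by
    show 𝟙 (u.obj e) ≫ φ = u.map (𝟙 e) ≫ φ
    simp⟩

/-- The arrow `s(id_e, φ)` of `E`, seen as an arrow with domain `e`. -/
def GoodMap.clv {p : E ⥤ B} (s : GoodMap p) (e : E) {b : B} (φ : p.obj e ⟶ b) :
    e ⟶ s.s.obj (MapCat.mk e b φ) :=
  eqToHom (Functor.congr_obj s.retr e).symm ≫ s.s.map (clArrow p e φ)

/-- Membership in the canonical cleavage `Σ^u` of `E^u`: the first coordinate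
is an identity. -/
def inSigmaU {A : Type} [SmallCategory A] {u : A ⥤ B} {X Y : MapCat u} (g : X ⟶ Y) : Prop :=
  ∃ h : X.pt = Y.pt, g.f = eqToHom h

/-- Normal cleavages, as a type. -/
def NormalCleavage (p : E ⥤ B) := { S : Cleavage p // S.IsNormal }

end DelHoyo

/-!
A normal cleavage `Σ` gives `s(e, φ)` := the codomain of the `Σ`-arrow over `φ`; on an arrow
`(f, g)` of `E^p`, `s` is the factorization of `f ≫ Σ(φ')` through the cartesian arrow `Σ(φ)`
lying over `g`, which exists and is unique because in a fibration cartesian arrows factor arrows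
over arbitrary arrows of `B`. Normality makes `s` a retraction of `i`, and `s` preserves
cartesian arrows since the `π`-cartesian arrows of `E^p` are those with invertible first
component and cartesian arrows cancel on the left. Conversely, the arrows `s(id_e, φ)` are
images of `π`-cartesian arrows, and `p` sends `s(id_e, φ)` to `φ`, so they form a normal
cleavage. The constructions are inverse because a good map is determined, by the same unique
factorization, by its arrows `s(id_e, φ)`.
-/

namespace DelHoyo

variable {E B : Type} [SmallCategory E] [SmallCategory B] {p : E ⥤ B}

theorem IsCartArrow.comp_eqToHom {e e₁ e₂ : E} {f : e ⟶ e₁} (hf : IsCartArrow p f)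
    (h : e₁ = e₂) : IsCartArrow p (f ≫ eqToHom h) := by
  subst h; simpa using hf

theorem IsCartArrow.eqToHom_comp {e₀ e e' : E} {f : e ⟶ e'} (hf : IsCartArrow p f)
    (h : e₀ = e) : IsCartArrow p (eqToHom h ≫ f) := by
  subst h; simpa using hf

theorem isCartArrow_of_isIso {e e' : E} (f : e ⟶ e') [IsIso f] : IsCartArrow p f := by
  intro e'' g w hg
  refine ⟨inv f ≫ g, ⟨by simp [hg], by simp⟩, ?_⟩
  rintro h ⟨-, rfl⟩
  simp

/-- Lift `ψ` cartesianly and use that cartesian arrows compose. -/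
theorem IsFibration.existsUnique_fac (hp : IsFibration p) {e e' e'' : E} {f : e ⟶ e'}
    (hf : IsCartArrow p f) (g : e ⟶ e'') (ψ : p.obj e' ⟶ p.obj e'')
    (hg : p.map g = p.map f ≫ ψ) : ∃! h : e' ⟶ e'', p.map h = ψ ∧ f ≫ h = g := by
  obtain ⟨z, k, wk, hk, hkψ⟩ := hp.1 e' (p.obj e'') ψ
  obtain ⟨v, ⟨hv, hfkv⟩, hv_uniq⟩ := hp.2 f k hf hk g wk (by simp [hg, ← hkψ])
  refine ⟨k ≫ v, ⟨by rw [Functor.map_comp, hv, hkψ], by rw [← hfkv, Category.assoc]⟩, ?_⟩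
  rintro h ⟨hh, hfh⟩
  obtain ⟨v', ⟨hv', hkv'⟩, -⟩ := hk h wk (by rw [hh, hkψ])
  rw [← hkv', hv_uniq v' ⟨hv', by rw [Category.assoc, hkv', hfh]⟩]

theorem IsFibration.isCartArrow_of_comp (hp : IsFibration p) {e e' e'' : E} {f : e ⟶ e'}
    {h : e' ⟶ e''} (hf : IsCartArrow p f) (hfh : IsCartArrow p (f ≫ h)) :
    IsCartArrow p h := by
  intro z k w hk
  obtain ⟨v, ⟨hv, hfhv⟩, hv_uniq⟩ := hfh (f ≫ k) w (by simp [hk])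
  obtain ⟨_, -, hfac_uniq⟩ :=
    hp.existsUnique_fac hf (f ≫ k) (p.map h ≫ eqToHom w) (by simp [hk])
  have hhv : h ≫ v = k :=
    (hfac_uniq _ ⟨by rw [Functor.map_comp, hv], by rw [← Category.assoc, hfhv]⟩).trans
      (hfac_uniq _ ⟨hk, rfl⟩).symm
  exact ⟨v, ⟨hv, hhv⟩, fun v' ⟨hv', hhv'⟩ => hv_uniq v' ⟨hv', by rw [Category.assoc, hhv']⟩⟩

namespace MapCat

variable {A : Type} [SmallCategory A] {u : A ⥤ B}

@[simp] theorem id_f (X : MapCat u) : (𝟙 X : X ⟶ X).f = 𝟙 X.pt := rfl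

@[simp] theorem id_g (X : MapCat u) : (𝟙 X : X ⟶ X).g = 𝟙 X.base := rfl

@[simp] theorem comp_f {X Y Z : MapCat u} (F : X ⟶ Y) (G : Y ⟶ Z) :
    (F ≫ G).f = F.f ≫ G.f := rfl

@[simp] theorem comp_g {X Y Z : MapCat u} (F : X ⟶ Y) (G : Y ⟶ Z) :
    (F ≫ G).g = F.g ≫ G.g := rfl

theorem isCartArrow_proj_of_isIso {X Y : MapCat u} (F : X ⟶ Y) [IsIso F.f] :
    IsCartArrow (proj u) F := by
  rintro ⟨z, b, ψ⟩ G (rfl : Y.base = b) (hG : G.g = F.g ≫ 𝟙 _)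
  rw [Category.comp_id] at hG
  have w : Y.hom ≫ 𝟙 _ = u.map (inv F.f ≫ G.f) ≫ ψ := by
    rw [Functor.map_comp, Category.assoc, ← G.w, hG, F.w]
    simp
  refine ⟨⟨inv F.f ≫ G.f, 𝟙 _, w⟩, ⟨rfl, MapCatHom.ext (by simp) (by simp [hG])⟩, ?_⟩
  rintro H ⟨hH, rfl⟩
  exact MapCatHom.ext (by simp) hH

/-- Factor `G = (𝟙, F.g) : X ⟶ ⟨X.pt, Y.base, X.hom ≫ F.g⟩` through `F` as `H`; then `H.f`
is inverse to `F.f`, on the other side because `H ≫ (F.f, 𝟙)` and `𝟙` both factor `F`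
through itself. -/
theorem isIso_f_of_isCartArrow {X Y : MapCat u} (F : X ⟶ Y)
    (hF : IsCartArrow (proj u) F) : IsIso F.f := by
  let Z : MapCat u := ⟨X.pt, Y.base, X.hom ≫ F.g⟩
  let G : X ⟶ Z := ⟨𝟙 X.pt, F.g, by simp [Z]⟩
  let K : Z ⟶ Y := ⟨F.f, 𝟙 Y.base, by simp [Z, F.w]⟩
  obtain ⟨H, ⟨hH, hFH⟩, -⟩ := hF G rfl (Category.comp_id _).symm
  obtain ⟨_, -, hid_uniq⟩ := hF F rfl (Category.comp_id _).symm
  have hFHK : F ≫ H ≫ K = F := by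
    rw [← Category.assoc, hFH]
    exact MapCatHom.ext (by simp [G, K]) (Category.comp_id F.g)
  have hHK : H ≫ K = 𝟙 Y :=
    (hid_uniq (H ≫ K) ⟨(Category.comp_id H.g).trans hH, hFHK⟩).trans
      (hid_uniq _ ⟨rfl, by simp⟩).symm
  exact ⟨H.f, by simpa [G] using congrArg MapCatHom.f hFH,
    by simpa [K] using congrArg MapCatHom.f hHK⟩

theorem isCartArrow_proj_iff {X Y : MapCat u} (F : X ⟶ Y) :
    IsCartArrow (proj u) F ↔ IsIso F.f :=
  ⟨isIso_f_of_isCartArrow F, fun _ => isCartArrow_proj_of_isIso F⟩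

end MapCat

namespace Cleavage

theorem ext {S T : Cleavage p} (h : ∀ ⦃e e' : E⦄ (f : e ⟶ e'), S.σ f ↔ T.σ f) : S = T := by
  obtain ⟨σ, _, _, _⟩ := S
  obtain ⟨τ, _, _, _⟩ := T
  obtain rfl : σ = τ := by
    funext e e' f
    exact propext (h f)
  rfl

variable (S : Cleavage p)

theorem mem_comp_eqToHom {e e₁ e₂ : E} {f : e ⟶ e₁} (hf : S.σ f) (h : e₁ = e₂) :
    S.σ (f ≫ eqToHom h) := by
  subst h; simpa using hf

theorem exists_eq_of_mem {e e₁ e₂ : E} {b : B} {f : e ⟶ e₁} {g : e ⟶ e₂}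
    (hf : S.σ f) (hg : S.σ g) (w₁ : p.obj e₁ = b) (w₂ : p.obj e₂ = b)
    (hfg : p.map f ≫ eqToHom w₁ = p.map g ≫ eqToHom w₂) :
    ∃ h : e₁ = e₂, f ≫ eqToHom h = g :=
  S.uniq f g (w₁.trans w₂.symm) hf hg (by simpa using hfg =≫ eqToHom w₂.symm)

noncomputable def cod (X : MapCat p) : E := (S.lift X.pt X.base X.hom).choose

noncomputable def arrow (X : MapCat p) : X.pt ⟶ S.cod X :=
  (S.lift X.pt X.base X.hom).choose_spec.choose

theorem cod_over (X : MapCat p) : p.obj (S.cod X) = X.base :=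
  (S.lift X.pt X.base X.hom).choose_spec.choose_spec.choose

theorem arrow_mem (X : MapCat p) : S.σ (S.arrow X) :=
  (S.lift X.pt X.base X.hom).choose_spec.choose_spec.choose_spec.1

theorem map_arrow (X : MapCat p) : p.map (S.arrow X) ≫ eqToHom (S.cod_over X) = X.hom :=
  (S.lift X.pt X.base X.hom).choose_spec.choose_spec.choose_spec.2

theorem isCartArrow_arrow (X : MapCat p) : IsCartArrow p (S.arrow X) :=
  S.cart _ (S.arrow_mem X)

theorem existsUnique_map (hp : IsFibration p) {X Y : MapCat p} (F : X ⟶ Y) :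
    ∃! h : S.cod X ⟶ S.cod Y,
      p.map h = eqToHom (S.cod_over X) ≫ F.g ≫ eqToHom (S.cod_over Y).symm ∧
      S.arrow X ≫ h = F.f ≫ S.arrow Y := by
  refine hp.existsUnique_fac (S.isCartArrow_arrow X) _ _ ?_
  calc p.map (F.f ≫ S.arrow Y)
      = p.map F.f ≫ Y.hom ≫ eqToHom (S.cod_over Y).symm := by
        rw [Functor.map_comp, ← S.map_arrow Y]; simp
    _ = (X.hom ≫ F.g) ≫ eqToHom (S.cod_over Y).symm := by rw [F.w, Category.assoc]
    _ = p.map (S.arrow X) ≫ eqToHom (S.cod_over X) ≫ F.g ≫ eqToHom (S.cod_over Y).symm := by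
        rw [← S.map_arrow X]; simp

noncomputable def map (hp : IsFibration p) {X Y : MapCat p} (F : X ⟶ Y) :
    S.cod X ⟶ S.cod Y :=
  (S.existsUnique_map hp F).exists.choose

variable (hp : IsFibration p)

theorem map_map {X Y : MapCat p} (F : X ⟶ Y) :
    p.map (S.map hp F) = eqToHom (S.cod_over X) ≫ F.g ≫ eqToHom (S.cod_over Y).symm :=
  (S.existsUnique_map hp F).exists.choose_spec.1

theorem arrow_comp_map {X Y : MapCat p} (F : X ⟶ Y) :
    S.arrow X ≫ S.map hp F = F.f ≫ S.arrow Y :=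
  (S.existsUnique_map hp F).exists.choose_spec.2

theorem eq_map {X Y : MapCat p} {F : X ⟶ Y} {h : S.cod X ⟶ S.cod Y}
    (h₁ : p.map h = eqToHom (S.cod_over X) ≫ F.g ≫ eqToHom (S.cod_over Y).symm)
    (h₂ : S.arrow X ≫ h = F.f ≫ S.arrow Y) : h = S.map hp F :=
  (S.existsUnique_map hp F).unique ⟨h₁, h₂⟩ ⟨S.map_map hp F, S.arrow_comp_map hp F⟩

noncomputable def toFunctor : MapCat p ⥤ E where
  obj := S.cod
  map := S.map hp
  map_id X := (S.eq_map hp (by simp) (by simp)).symm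
  map_comp F G := (S.eq_map hp (by simp [map_map])
    (by rw [← Category.assoc, arrow_comp_map, Category.assoc, arrow_comp_map,
      MapCat.comp_f, Category.assoc])).symm

theorem exists_arrow_incl (hS : S.IsNormal) (e : E) :
    ∃ h : S.cod ⟨e, p.obj e, 𝟙 _⟩ = e, S.arrow _ ≫ eqToHom h = 𝟙 e :=
  S.exists_eq_of_mem (S.arrow_mem _) (hS e) (S.cod_over _) rfl
    ((S.map_arrow _).trans (by simp))

theorem cod_incl (hS : S.IsNormal) (e : E) : S.cod ⟨e, p.obj e, 𝟙 _⟩ = e :=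
  (S.exists_arrow_incl hS e).choose

theorem arrow_incl (hS : S.IsNormal) (e : E) :
    S.arrow ⟨e, p.obj e, 𝟙 _⟩ = eqToHom (S.cod_incl hS e).symm :=
  ((comp_eqToHom_iff _ _ _).1 (S.exists_arrow_incl hS e).choose_spec).trans
    (Category.id_comp _)

theorem incl_comp_toFunctor (hS : S.IsNormal) : MapCat.incl p ⋙ S.toFunctor hp = 𝟭 E := by
  refine CategoryTheory.Functor.ext (S.cod_incl hS) fun e e' f => ?_
  refine (S.eq_map hp
    (h := eqToHom (S.cod_incl hS e) ≫ f ≫ eqToHom (S.cod_incl hS e').symm) ?_ ?_).symm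
  · simp [MapCat.incl, eqToHom_map]
  · simp [MapCat.incl, arrow_incl S hS]

theorem toFunctor_comp : S.toFunctor hp ⋙ p = MapCat.proj p :=
  CategoryTheory.Functor.ext S.cod_over fun _ _ F => S.map_map hp F

theorem isCartArrow_toFunctor_map {X Y : MapCat p} (F : X ⟶ Y)
    (hF : IsCartArrow (MapCat.proj p) F) : IsCartArrow p ((S.toFunctor hp).map F) := by
  have := (MapCat.isCartArrow_proj_iff F).1 hF
  have hcomp : IsCartArrow p (S.arrow X ≫ S.map hp F) := by
    rw [arrow_comp_map]
    exact hp.2 _ _ (isCartArrow_of_isIso F.f) (S.isCartArrow_arrow Y)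
  exact hp.isCartArrow_of_comp (S.isCartArrow_arrow X) hcomp

noncomputable def toGoodMap (hS : S.IsNormal) : GoodMap p where
  s := S.toFunctor hp
  retr := S.incl_comp_toFunctor hp hS
  over' := S.toFunctor_comp hp
  cart _ _ := S.isCartArrow_toFunctor_map hp

theorem toGoodMap_clv (hS : S.IsNormal) (e : E) {b : B} (φ : p.obj e ⟶ b) :
    (S.toGoodMap hp hS).clv e φ = S.arrow ⟨e, b, φ⟩ := by
  have h : S.arrow ⟨e, p.obj e, 𝟙 _⟩ ≫ S.map hp (clArrow p e φ) = 𝟙 e ≫ S.arrow ⟨e, b, φ⟩ :=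
    S.arrow_comp_map hp (clArrow p e φ)
  rw [arrow_incl S hS, Category.id_comp] at h
  exact h

end Cleavage

namespace GoodMap

theorem ext {s t : GoodMap p} (h : s.s = t.s) : s = t := by
  cases s; cases t; cases h; rfl

variable (s : GoodMap p)

theorem obj_over (X : MapCat p) : p.obj (s.s.obj X) = X.base :=
  Functor.congr_obj s.over' X

theorem map_map {X Y : MapCat p} (F : X ⟶ Y) :
    p.map (s.s.map F) = eqToHom (s.obj_over X) ≫ F.g ≫ eqToHom (s.obj_over Y).symm :=
  Functor.congr_hom s.over' F

/-- `s.clv X.pt X.hom`, typed with codomain `s.s.obj X` so that it composes with `s.s.map F`. -/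
def arrow (X : MapCat p) : X.pt ⟶ s.s.obj X := s.clv X.pt X.hom

theorem map_clv (e : E) {b : B} (φ : p.obj e ⟶ b) :
    p.map (s.clv e φ) ≫ eqToHom (s.obj_over ⟨e, b, φ⟩) = φ := by
  rw [clv, Functor.map_comp, map_map, eqToHom_map]
  simp only [Category.assoc, eqToHom_trans, eqToHom_trans_assoc]
  -- the remaining `eqToHom`s are between definitionally equal objects
  exact (Category.id_comp _).trans (Category.comp_id φ)

theorem isCartArrow_clv (e : E) {b : B} (φ : p.obj e ⟶ b) : IsCartArrow p (s.clv e φ) :=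
  (s.cart _ ((MapCat.isCartArrow_proj_iff _).2 (inferInstanceAs (IsIso (𝟙 e))))).eqToHom_comp _

theorem clv_id (e : E) : s.clv e (𝟙 (p.obj e)) = eqToHom (Functor.congr_obj s.retr e).symm := by
  have hcl : clArrow p e (𝟙 (p.obj e)) = 𝟙 ((MapCat.incl p).obj e) := MapCatHom.ext rfl rfl
  have hmap : s.s.map (clArrow p e (𝟙 (p.obj e))) = 𝟙 _ :=
    (congrArg s.s.map hcl).trans (s.s.map_id _)
  rw [clv, hmap]
  exact Category.comp_id _

theorem isCartArrow_arrow (X : MapCat p) : IsCartArrow p (s.arrow X) := s.isCartArrow_clv _ _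

theorem map_arrow (X : MapCat p) : p.map (s.arrow X) ≫ eqToHom (s.obj_over X) = X.hom :=
  s.map_clv X.pt X.hom

theorem arrow_comp_map {X Y : MapCat p} (F : X ⟶ Y) :
    s.arrow X ≫ s.s.map F = F.f ≫ s.arrow Y := by
  have hcl : clArrow p X.pt X.hom ≫ F = (MapCat.incl p).map F.f ≫ clArrow p Y.pt Y.hom :=
    MapCatHom.ext (by simp [clArrow, MapCat.incl]) F.w
  have hretr := Functor.congr_hom s.retr F.f
  simp only [Functor.comp_map, Functor.id_map] at hretr
  rw [arrow, arrow, clv, clv, Category.assoc, ← Functor.map_comp, hcl, Functor.map_comp, hretr]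
  simp

/-- The image of `F : X ⟶ Y` under a good map is the unique factorization of
`F.f ≫ s.arrow Y` through the cartesian arrow `s.arrow X`. -/
theorem ext_of_arrow (hp : IsFibration p) {s t : GoodMap p}
    (h : ∀ X, ∃ h : s.s.obj X = t.s.obj X, s.arrow X ≫ eqToHom h = t.arrow X) : s = t := by
  choose hobj harrow using h
  refine ext (CategoryTheory.Functor.ext hobj fun X Y F => ?_)
  have hfac := s.arrow_comp_map F
  refine (hp.existsUnique_fac (s.isCartArrow_arrow X) _ _
    (by rw [← hfac, Functor.map_comp])).unique ⟨rfl, hfac⟩ ⟨?_, ?_⟩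
  · simp [map_map, eqToHom_map]
  · rw [reassoc_of% harrow X, reassoc_of% (t.arrow_comp_map F), ← harrow Y]
    simp

/-- The arrows `s(id_e, φ)`, closed under `eqToHom` since their codomain is only
propositionally equal to a given object. -/
def toCleavage : Cleavage p where
  σ e e' f := ∃ (b : B) (φ : p.obj e ⟶ b) (h : s.s.obj ⟨e, b, φ⟩ = e'), s.clv e φ ≫ eqToHom h = f
  cart := by
    rintro e e' f ⟨b, φ, h, rfl⟩
    exact (s.isCartArrow_clv e φ).comp_eqToHom h
  lift e b φ := ⟨_, s.clv e φ, s.obj_over _, ⟨b, φ, rfl, Category.comp_id _⟩, s.map_clv e φ⟩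
  uniq := by
    rintro e e₁ e₂ f g w ⟨b₁, φ₁, rfl, rfl⟩ ⟨b₂, φ₂, rfl, rfl⟩ hfg
    have hb : b₁ = b₂ := (s.obj_over _).symm.trans (w.trans (s.obj_over _))
    subst hb
    have hfg' : p.map (s.clv e φ₁) ≫ eqToHom w = p.map (s.clv e φ₂) := by simpa using hfg
    obtain rfl : φ₁ = φ₂ := calc
      φ₁ = p.map (s.clv e φ₁) ≫ eqToHom w ≫ eqToHom (s.obj_over _) := by
        simpa using (s.map_clv e φ₁).symm
      _ = φ₂ := by rw [← Category.assoc, hfg', s.map_clv]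
    exact ⟨rfl, by simp⟩

theorem toCleavage_isNormal : s.toCleavage.IsNormal := fun e =>
  ⟨p.obj e, 𝟙 _, Functor.congr_obj s.retr e, by
    rw [clv_id]
    exact (eqToHom_trans _ _).trans (eqToHom_refl _ _)⟩

end GoodMap

theorem Cleavage.toCleavage_toGoodMap (S : Cleavage p) (hp : IsFibration p)
    (hS : S.IsNormal) : (S.toGoodMap hp hS).toCleavage = S := by
  refine Cleavage.ext fun e e' f => ⟨?_, fun hf => ?_⟩
  · rintro ⟨b, φ, h, rfl⟩
    rw [S.toGoodMap_clv hp hS]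
    exact S.mem_comp_eqToHom (S.arrow_mem _) h
  · obtain ⟨h, hh⟩ := S.exists_eq_of_mem (S.arrow_mem ⟨e, p.obj e', p.map f⟩) hf
      (S.cod_over _) rfl (by simpa using S.map_arrow _)
    exact ⟨_, _, h, by rw [S.toGoodMap_clv hp hS]; exact hh⟩

theorem GoodMap.toGoodMap_toCleavage (hp : IsFibration p) (s : GoodMap p) :
    s.toCleavage.toGoodMap hp s.toCleavage_isNormal = s := by
  refine GoodMap.ext_of_arrow hp fun X => ?_
  rw [GoodMap.arrow, Cleavage.toGoodMap_clv]
  exact s.toCleavage.exists_eq_of_mem (s.toCleavage.arrow_mem X) ⟨_, _, rfl, Category.comp_id _⟩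
    (s.toCleavage.cod_over X) (s.obj_over X) ((s.toCleavage.map_arrow X).trans (s.map_arrow X).symm)

end DelHoyo

open CategoryTheory in
/-- the bijection between normal cleavages of `p` and good maps `E^p ⥤ E`.
The good map associated to `Σ` sends `(e, φ)` to the codomain of the unique arrow of `Σ`
with domain `e` over `φ`, and the cleavage associated to a good map `s` consists of the
arrows `s(id_e, φ)`. -/
theorem DelHoyo.stmt4 {E B : Type} [SmallCategory E] [SmallCategory B]
    (p : E ⥤ B) (hp : IsFibration p) :
    ∃ eqv : NormalCleavage p ≃ GoodMap p,
      (∀ (S : NormalCleavage p) (X : MapCat p),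
        ∃ f : X.pt ⟶ (eqv S).s.obj X, S.1.σ f ∧
          ∃ w : p.obj ((eqv S).s.obj X) = X.base, p.map f ≫ eqToHom w = X.hom) ∧
      (∀ (s : GoodMap p) (e : E) (b : B) (φ : p.obj e ⟶ b),
        (eqv.symm s).1.σ (s.clv e φ)) := by
  let eqv : NormalCleavage p ≃ GoodMap p :=
    { toFun S := S.1.toGoodMap hp S.2
      invFun s := ⟨s.toCleavage, s.toCleavage_isNormal⟩
      left_inv S := Subtype.ext (S.1.toCleavage_toGoodMap hp S.2)
      right_inv s := s.toGoodMap_toCleavage hp }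
  exact ⟨eqv, fun S X => ⟨S.1.arrow X, S.1.arrow_mem X, S.1.cod_over X, S.1.map_arrow X⟩,
    fun s e b φ => ⟨b, φ, rfl, Category.comp_id _⟩⟩
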